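/- Under the standing assumptions, let t = |ξ(L)| and fix a first-order formula φ(x_1,…,x_p,y) with p ≥ 1. For each n, let s_n ∈ [0,1]^t be the non-increasing rearrangement of the vector of values (⟨φ,(G_n,u)⟩)_{u ∈ ξ(G_n)}, and let s ∈ [0,1]^t be the non-increasing rearrangement of (⟨φ,(L,u)⟩)_{u ∈ ξ(L)}. Then s_n converges to s (coordinatewise, equivalently in the supremum norm on [0,1]^t). -/

import Mathlib

/-
Fix `k ≥ 1`. Split `k * p` variables into `k` blocks of `p`; for `j ≥ 1` let `θ_j` say that at
least `j` roots `y` satisfy `ξ(y)` together with `φ(x̄_m, y)` for every block `x̄_m`. Counting each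
tuple once for every root it sees gives the layer-cake identity
`∑_{j ≤ |ξ|} ⟨θ_j, ·⟩ = ∑_{u ∈ ξ} ⟨φ, (·, u)⟩ ^ k`, because under a product measure the `k` blocks
are independent. A finite graph is the modeling carrying the uniform measure, so the identity holds
for `G_n` and `L` alike, and FO convergence makes every power sum of the rearranged vectors
converge. Power sums determine a multiset, hence a non-increasing vector; since the vectors lie in
the compact cube `[0,1]^t`, every cluster point of `s_n` is `s`.
-/

open FirstOrder Language MeasureTheory Filter

/-- The set of solutions of a formula `φ` in `p` free variables in a graph. -/
def solSet {V : Type} (G : SimpleGraph V) {p : ℕ}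
    (φ : Language.graph.Formula (Fin p)) : Set (Fin p → V) :=
  letI := G.structure
  {v | φ.Realize v}

/-- The set of solutions of a rooted formula `φ(x₁,…,x_p,y)` with the root variable `y`
interpreted as `r`. -/
def solSetR {V : Type} (G : SimpleGraph V) {p : ℕ}
    (φ : Language.graph.Formula (Fin (p + 1))) (r : V) : Set (Fin p → V) :=
  letI := G.structure
  {v | φ.Realize (Fin.snoc v r)}

/-- The set of solutions of a one-variable formula. -/
def sol1 {V : Type} (G : SimpleGraph V) (ξ : Language.graph.Formula (Fin 1)) : Set V :=
  letI := G.structure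
  {v : V | ξ.Realize (fun _ => v)}

/-- Stone pairing `⟨φ,G⟩` of a formula and a finite graph. -/
noncomputable def stoneG {V : Type} (fV : Fintype V) (G : SimpleGraph V) {p : ℕ}
    (φ : Language.graph.Formula (Fin p)) : ℝ :=
  (Nat.card (solSet G φ) : ℝ) / (Fintype.card V : ℝ) ^ p

/-- Rooted Stone pairing `⟨φ,(G,r)⟩` of a rooted formula and a finite graph with root `r`. -/
noncomputable def stoneGR {V : Type} (fV : Fintype V) (G : SimpleGraph V) {p : ℕ}
    (φ : Language.graph.Formula (Fin (p + 1))) (r : V) : ℝ :=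
  (Nat.card (solSetR G φ r) : ℝ) / (Fintype.card V : ℝ) ^ p

/-- Stone pairing `⟨φ,L⟩` of a formula and a modeling. -/
noncomputable def stoneL {W : Type} [MeasurableSpace W] (L : SimpleGraph W)
    (ν : Measure W) {p : ℕ} (φ : Language.graph.Formula (Fin p)) : ℝ :=
  ((Measure.pi fun _ : Fin p => ν) (solSet L φ)).toReal

/-- Rooted Stone pairing `⟨φ,(L,r)⟩` of a rooted formula and a modeling with root `r`. -/
noncomputable def stoneLR {W : Type} [MeasurableSpace W] (L : SimpleGraph W)
    (ν : Measure W) {p : ℕ} (φ : Language.graph.Formula (Fin (p + 1))) (r : W) : ℝ :=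
  ((Measure.pi fun _ : Fin p => ν) (solSetR L φ r)).toReal

open Topology ProbabilityTheory
open scoped ENNReal

namespace FirstOrder.Language.Formula

variable {L : Language} {M : Type*} [L.Structure M] {m : ℕ}

noncomputable def existsAtLeast (j : ℕ) (ψ : L.Formula (Fin (m + 1))) : L.Formula (Fin m) :=
  iExs (Fin j) <|
    (iInf fun q : {q : Fin j × Fin j // q.1 ≠ q.2} =>
        ∼(Term.equal (var (Sum.inr q.1.1)) (var (Sum.inr q.1.2)))) ⊓
      iInf fun i : Fin j => ψ.relabel (Fin.snoc Sum.inl (Sum.inr i))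

theorem realize_existsAtLeast {j : ℕ} {ψ : L.Formula (Fin (m + 1))} {v : Fin m → M} :
    (existsAtLeast j ψ).Realize v ↔
      ∃ w : Fin j → M, Function.Injective w ∧ ∀ i, ψ.Realize (Fin.snoc v (w i)) := by
  simp only [existsAtLeast, realize_iExs, realize_inf, realize_iInf, realize_not,
    realize_equal, Term.realize_var, Sum.elim_inr, realize_relabel, Fin.comp_snoc,
    Sum.elim_comp_inl, Sum.elim_inr]
  refine exists_congr fun w => and_congr_left' ⟨fun h i i' hii' => ?_, ?_⟩
  · by_contra hne
    exact h ⟨(i, i'), hne⟩ hii'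
  · rintro hw ⟨q, hq⟩ heq
    exact hq (hw heq)

variable {p : ℕ}

noncomputable def conjBlocks (ξ : L.Formula (Fin 1)) (φ : L.Formula (Fin (p + 1))) (k : ℕ) :
    L.Formula (Fin (k * p + 1)) :=
  ξ.relabel (fun _ => Fin.last _) ⊓
    iInf fun m : Fin k =>
      φ.relabel (Fin.snoc (fun i => (finProdFinEquiv (m, i)).castSucc) (Fin.last _))

theorem realize_conjBlocks {ξ : L.Formula (Fin 1)} {φ : L.Formula (Fin (p + 1))} {k : ℕ}
    {v : Fin (k * p) → M} {y : M} :
    (conjBlocks ξ φ k).Realize (Fin.snoc v y) ↔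
      ξ.Realize (fun _ => y) ∧
        ∀ m, φ.Realize (Fin.snoc (fun i => v (finProdFinEquiv (m, i))) y) := by
  simp only [conjBlocks, realize_inf, realize_iInf, realize_relabel, Fin.comp_snoc,
    Fin.snoc_last]
  simp only [Function.comp_def, Fin.snoc_castSucc, Fin.snoc_last]

end FirstOrder.Language.Formula

section Blocks

variable (W : Type*) [MeasurableSpace W] (k p : ℕ)

def blockEquiv : (Fin (k * p) → W) ≃ᵐ (Fin k → Fin p → W) :=
  (MeasurableEquiv.piCongrLeft (fun _ => W) finProdFinEquiv).symm.trans
    (MeasurableEquiv.curry (Fin k) (Fin p) W)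

variable {W k p}

theorem measurePreserving_blockEquiv (ν : Measure W) [IsProbabilityMeasure ν] :
    MeasurePreserving (blockEquiv W k p) (Measure.pi fun _ => ν)
      (Measure.pi fun _ => Measure.pi fun _ => ν) := by
  refine (measurePreserving_piCongrLeft (fun _ => ν) finProdFinEquiv).symm.trans
    ⟨by fun_prop, ?_⟩
  simpa only [Measure.infinitePi_eq_pi] using
    Measure.infinitePi_map_curry fun (_ : Fin k) (_ : Fin p) => ν

theorem pi_blockEquiv_preimage_pi (ν : Measure W) [IsProbabilityMeasure ν]
    (S : Set (Fin p → W)) :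
    Measure.pi (fun _ => ν) (blockEquiv W k p ⁻¹' Set.univ.pi fun _ => S) =
      Measure.pi (fun _ => ν) S ^ k := by
  rw [(measurePreserving_blockEquiv ν).measure_preimage_equiv, Measure.pi_pi]
  simp

end Blocks

open scoped Classical in
theorem sum_range_measure_lt_card_filter {X : Type*} [MeasurableSpace X] (μ : Measure X)
    {t : ℕ} {A : Fin t → Set X} (hA : ∀ i, MeasurableSet (A i)) :
    ∑ j ∈ Finset.range t, μ {x | j < (Finset.univ.filter fun i => x ∈ A i).card} =
      ∑ i, μ (A i) := by
  set c : X → ℕ := fun x => (Finset.univ.filter fun i => x ∈ A i).card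
  have hc_eq : ∀ x, (c x : ℝ≥0∞) = ∑ i, (A i).indicator 1 x := by
    intro x
    simp [c, Set.indicator_apply, Finset.sum_boole]
  have hc : Measurable fun x => (c x : ℝ≥0∞) := by
    simp only [hc_eq]
    exact Finset.measurable_sum _ fun i _ => measurable_one.indicator (hA i)
  have hlevel : ∀ j : ℕ, MeasurableSet {x | j < c x} := fun j => by
    simpa using measurableSet_lt (f := fun _ => (j : ℝ≥0∞)) measurable_const hc
  have hlayers : ∀ x, ∑ j ∈ Finset.range t, {x | j < c x}.indicator 1 x = (c x : ℝ≥0∞) := by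
    intro x
    have hct : c x ≤ t := (Finset.card_filter_le _ _).trans (Finset.card_fin t).le
    have hrange : (Finset.range t).filter (· < c x) = Finset.range (c x) := by
      ext j
      simp only [Finset.mem_filter, Finset.mem_range]
      omega
    simp [Set.indicator_apply, Finset.sum_boole, hrange]
  calc ∑ j ∈ Finset.range t, μ {x | j < c x}
      = ∫⁻ x, ∑ j ∈ Finset.range t, {x | j < c x}.indicator 1 x ∂μ := by
        rw [lintegral_finsetSum _ fun j _ => measurable_one.indicator (hlevel j)]
        simp [lintegral_indicator_one (hlevel _)]
    _ = ∫⁻ x, ∑ i, (A i).indicator 1 x ∂μ := by simp only [hlayers, hc_eq]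
    _ = ∑ i, μ (A i) := by
        rw [lintegral_finsetSum _ fun i _ => measurable_one.indicator (hA i)]
        simp [lintegral_indicator_one (hA _)]

open scoped Classical in
theorem mem_solSet_existsAtLeast_iff {V : Type} (G : SimpleGraph V) {m t j : ℕ}
    {ψ : Language.graph.Formula (Fin (m + 1))} {S : Set V} (g : Fin t ≃ S) {v : Fin m → V}
    (hS : ∀ y, v ∈ solSetR G ψ y → y ∈ S) :
    v ∈ solSet G (Formula.existsAtLeast j ψ) ↔
      j ≤ (Finset.univ.filter fun i => v ∈ solSetR G ψ (g i)).card := by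
  let := G.structure
  rw [← Fintype.card_subtype]
  change (Formula.existsAtLeast j ψ).Realize v ↔ _
  rw [Formula.realize_existsAtLeast]
  constructor
  · rintro ⟨w, hw, hroot⟩
    refine (Fintype.card_fin j).symm.trans_le <| Fintype.card_le_of_injective
      (fun a => ⟨g.symm ⟨w a, hS _ (hroot a)⟩, by simpa [solSetR] using hroot a⟩)
      fun a b hab => ?_
    exact hw (by simpa using congrArg (fun i => (g i : V)) (congrArg Subtype.val hab))
  · intro hj
    obtain ⟨e⟩ := Function.Embedding.nonempty_of_card_le (α := Fin j) (by simpa using hj)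
    exact ⟨fun a => g (e a), fun a b hab => e.injective (Subtype.ext (g.injective
      (Subtype.ext hab))), fun a => (e a).2⟩

theorem measurable_snoc {W : Type*} [MeasurableSpace W] {p : ℕ} (r : W) :
    Measurable fun v : Fin p → W => (Fin.snoc v r : Fin (p + 1) → W) := by
  refine measurable_pi_lambda _ fun j => ?_
  induction j using Fin.lastCases with
  | last => simp
  | cast i => simpa using measurable_pi_apply i

theorem measurableSet_solSetR {W : Type} [MeasurableSpace W] {L : SimpleGraph W} {p : ℕ}
    {φ : Language.graph.Formula (Fin (p + 1))} (hφ : MeasurableSet (solSet L φ)) (r : W) :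
    MeasurableSet (solSetR L φ r) :=
  measurable_snoc r hφ

theorem mem_solSetR_conjBlocks_iff {W : Type} [MeasurableSpace W] (L : SimpleGraph W)
    {p k : ℕ} {ξ : Language.graph.Formula (Fin 1)} {φ : Language.graph.Formula (Fin (p + 1))}
    {v : Fin (k * p) → W} {y : W} :
    v ∈ solSetR L (Formula.conjBlocks ξ φ k) y ↔
      y ∈ sol1 L ξ ∧ blockEquiv W k p v ∈ Set.univ.pi fun _ => solSetR L φ y := by
  let := L.structure
  simp only [solSetR, sol1, Set.mem_ofPred_eq, Set.mem_pi, Set.mem_univ, true_implies]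
  exact Formula.realize_conjBlocks

theorem sum_stoneL_existsAtLeast_conjBlocks {W : Type} [MeasurableSpace W] (L : SimpleGraph W)
    (ν : Measure W) [IsProbabilityMeasure ν]
    (hmeas : ∀ (q : ℕ) (ψ : Language.graph.Formula (Fin q)), MeasurableSet (solSet L ψ))
    (ξ : Language.graph.Formula (Fin 1)) {p : ℕ} (φ : Language.graph.Formula (Fin (p + 1)))
    {t : ℕ} (g : Fin t ≃ sol1 L ξ) (k : ℕ) :
    ∑ j ∈ Finset.range t, stoneL L ν (Formula.existsAtLeast (j + 1) (Formula.conjBlocks ξ φ k)) =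
      ∑ i, stoneLR L ν φ (g i) ^ k := by
  classical
  set ψ := Formula.conjBlocks ξ φ k
  have hlevel : ∀ j : ℕ, solSet L (Formula.existsAtLeast (j + 1) ψ) =
      {v | j < (Finset.univ.filter fun i => v ∈ solSetR L ψ (g i)).card} := fun j => by
    ext v
    exact mem_solSet_existsAtLeast_iff L g fun y hy => ((mem_solSetR_conjBlocks_iff L).1 hy).1
  have hblocks : ∀ i, solSetR L ψ (g i) =
      blockEquiv W k p ⁻¹' Set.univ.pi fun _ => solSetR L φ (g i) := fun i => by
    ext v
    simpa [(g i).2] using mem_solSetR_conjBlocks_iff L (v := v) (y := g i) (ξ := ξ) (φ := φ)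
  calc ∑ j ∈ Finset.range t, stoneL L ν (Formula.existsAtLeast (j + 1) ψ)
      = (∑ j ∈ Finset.range t, Measure.pi (fun _ => ν)
          {v | j < (Finset.univ.filter fun i => v ∈ solSetR L ψ (g i)).card}).toReal := by
        simp only [stoneL, hlevel, ENNReal.toReal_sum fun _ _ => measure_ne_top _ _]
    _ = (∑ i, Measure.pi (fun _ => ν) (solSetR L ψ (g i))).toReal := by
        rw [sum_range_measure_lt_card_filter _ fun i => measurableSet_solSetR (hmeas _ _) _]
    _ = ∑ i, stoneLR L ν φ (g i) ^ k := by
        simp only [hblocks, pi_blockEquiv_preimage_pi, stoneLR, ENNReal.toReal_pow,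
          ENNReal.toReal_sum fun _ _ => ENNReal.pow_ne_top (measure_ne_top _ _)]

section Uniform

variable {V : Type} [MeasurableSpace V] [MeasurableSingletonClass V]

theorem pi_uniformOn_univ_toReal [Fintype V] {p : ℕ} (S : Set (Fin p → V)) :
    (Measure.pi (fun _ : Fin p => uniformOn (Set.univ : Set V)) S).toReal =
      Nat.card S / Fintype.card V ^ p := by
  rw [← uniformOn_pi, Set.pi_univ, uniformOn_univ,
    Measure.count_apply_finite _ S.toFinite]
  simp [Nat.card_eq_card_finite_toFinset S.toFinite]

theorem stoneG_eq_stoneL_uniformOn (fV : Fintype V) (G : SimpleGraph V) {p : ℕ}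
    (φ : Language.graph.Formula (Fin p)) :
    stoneG fV G φ = stoneL G (uniformOn Set.univ) φ :=
  (pi_uniformOn_univ_toReal _).symm

theorem stoneGR_eq_stoneLR_uniformOn (fV : Fintype V) (G : SimpleGraph V) {p : ℕ}
    (φ : Language.graph.Formula (Fin (p + 1))) (r : V) :
    stoneGR fV G φ r = stoneLR G (uniformOn Set.univ) φ r :=
  (pi_uniformOn_univ_toReal _).symm

end Uniform

theorem sum_stoneG_existsAtLeast_conjBlocks {V : Type} (fV : Fintype V) (G : SimpleGraph V)
    (ξ : Language.graph.Formula (Fin 1)) {p : ℕ} (φ : Language.graph.Formula (Fin (p + 1)))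
    {t : ℕ} (g : Fin t ≃ sol1 G ξ) (k : ℕ) :
    ∑ j ∈ Finset.range t, stoneG fV G (Formula.existsAtLeast (j + 1) (Formula.conjBlocks ξ φ k)) =
      ∑ i, stoneGR fV G φ (g i) ^ k := by
  let : MeasurableSpace V := ⊤
  have : MeasurableSingletonClass V := ⟨fun _ => trivial⟩
  rcases isEmpty_or_nonempty V with hV | hV
  · obtain rfl : t = 0 := by
      by_contra ht
      exact hV.false (g ⟨0, Nat.pos_of_ne_zero ht⟩).1
    simp
  · simp only [stoneG_eq_stoneL_uniformOn, stoneGR_eq_stoneLR_uniformOn]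
    exact sum_stoneL_existsAtLeast_conjBlocks G _ (fun _ _ => (Set.toFinite _).measurableSet)
      ξ φ g k

theorem stoneGR_mem_Icc {V : Type} (fV : Fintype V) (G : SimpleGraph V) {p : ℕ}
    (φ : Language.graph.Formula (Fin (p + 1))) (r : V) :
    stoneGR fV G φ r ∈ Set.Icc 0 1 := by
  have hcard : Nat.card (solSetR G φ r) ≤ Fintype.card V ^ p := by
    simpa using Finite.card_subtype_le (· ∈ solSetR G φ r)
  exact ⟨by unfold stoneGR; positivity,
    div_le_one_of_le₀ (by exact_mod_cast hcard) (by positivity)⟩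

section PowerSums

open Polynomial

theorem Multiset.sum_map_eval_eq_of_sum_map_pow_eq {K : Type*} [CommRing K]
    {s s' : Multiset K} (h : ∀ k : ℕ, (s.map (· ^ k)).sum = (s'.map (· ^ k)).sum) (P : K[X]) :
    (s.map P.eval).sum = (s'.map P.eval).sum := by
  induction P using Polynomial.induction_on' with
  | add P Q hP hQ => simp only [eval_add, Multiset.sum_map_add, hP, hQ]
  | monomial k c => simp only [eval_monomial, Multiset.sum_map_mul_left, h k]

theorem Multiset.eq_of_sum_map_pow_eq {K : Type*} [Field K] [CharZero K]
    {s s' : Multiset K} (h : ∀ k : ℕ, (s.map (· ^ k)).sum = (s'.map (· ^ k)).sum) : s = s' := by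
  classical
  ext w
  -- Interpolation: `P` vanishes at every value of `s + s'` other than `w`.
  set P : K[X] := ∏ y ∈ (s + s').toFinset.erase w, (X - C y)
  have hPw : P.eval w ≠ 0 := by
    simp only [P, eval_prod, eval_sub, eval_X, eval_C]
    exact Finset.prod_ne_zero_iff.2 fun y hy => sub_ne_zero.2 (Finset.ne_of_mem_erase hy).symm
  have hsum : ∀ r : Multiset K, r ≤ s + s' → (r.map P.eval).sum = r.count w • P.eval w := by
    intro r hr
    rw [Finset.sum_multiset_map_count, Finset.sum_eq_single w]
    · intro y hy hyw
      have : P.eval y = 0 := by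
        simp only [P, eval_prod, eval_sub, eval_X, eval_C]
        exact Finset.prod_eq_zero (Finset.mem_erase.2 ⟨hyw, Multiset.mem_toFinset.2
          (Multiset.mem_of_le hr (Multiset.mem_toFinset.1 hy))⟩) (sub_self y)
      rw [this, smul_zero]
    · intro hw
      rw [Multiset.count_eq_zero.2 (fun h => hw (Multiset.mem_toFinset.2 h)), zero_smul]
  have := Multiset.sum_map_eval_eq_of_sum_map_pow_eq h P
  rw [hsum s (Multiset.le_add_right _ _), hsum s' (Multiset.le_add_left _ _), nsmul_eq_mul,
    nsmul_eq_mul] at this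
  exact_mod_cast mul_right_cancel₀ hPw this

end PowerSums

theorem Antitone.eq_of_sum_pow_eq {K : Type*} [Field K] [LinearOrder K] [CharZero K] {t : ℕ}
    {a b : Fin t → K} (ha : Antitone a) (hb : Antitone b)
    (h : ∀ k : ℕ, ∑ i, a i ^ (k + 1) = ∑ i, b i ^ (k + 1)) : a = b := by
  have hmap : Finset.univ.val.map a = Finset.univ.val.map b := by
    refine Multiset.eq_of_sum_map_pow_eq fun k => ?_
    simp only [Multiset.map_map, Function.comp_def]
    cases k with
    | zero => simp
    | succ k => exact h k
  rw [Fin.univ_val_map, Fin.univ_val_map, Multiset.coe_eq_coe] at hmap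
  exact List.ofFn_injective <|
    hmap.eq_of_sortedGE (List.sortedGE_ofFn_iff.2 ha) (List.sortedGE_ofFn_iff.2 hb)

theorem tendsto_of_tendsto_sum_pow {ι : Type*} {l : Filter ι} {t : ℕ} {a : ι → Fin t → ℝ}
    {b : Fin t → ℝ} {K : Set (Fin t → ℝ)} (hK : IsCompact K) (haK : ∀ n, a n ∈ K)
    (ha : ∀ n, Antitone (a n)) (hb : Antitone b)
    (hpow : ∀ k : ℕ, Tendsto (fun n => ∑ i, a n i ^ (k + 1)) l (𝓝 (∑ i, b i ^ (k + 1)))) :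
    Tendsto a l (𝓝 b) := by
  refine hK.tendsto_nhds_of_unique_mapClusterPt (Eventually.of_forall haK) fun c _ hc => ?_
  have hc_anti : Antitone c :=
    isClosed_antitone.mem_of_mapClusterPt hc (Eventually.of_forall ha)
  refine hc_anti.eq_of_sum_pow_eq hb fun k => ?_
  have hck := hc.tendsto_comp (f := fun x : Fin t → ℝ => ∑ i, x i ^ (k + 1))
    ((by fun_prop : Continuous _).tendsto c)
  by_contra hne
  exact (hck.clusterPt.mono (hpow k)).neBot.ne (disjoint_nhds_nhds.2 hne).eq_bot

theorem rearranged_root_values_converge_general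
    (V : ℕ → Type) (fV : ∀ n, Fintype (V n))
    (G : ∀ n, SimpleGraph (V n))
    (W : Type) [MeasurableSpace W]
    (L : SimpleGraph W) (ν : Measure W) [IsProbabilityMeasure ν]
    (hmeas : ∀ (p : ℕ) (φ : Language.graph.Formula (Fin p)), MeasurableSet (solSet L φ))
    (hlim : ∀ (p : ℕ) (φ : Language.graph.Formula (Fin p)),
      Tendsto (fun n => stoneG (fV n) (G n) φ) atTop (nhds (stoneL L ν φ)))
    (ξ : Language.graph.Formula (Fin 1))
    (t : ℕ)
    (p : ℕ) (φ : Language.graph.Formula (Fin (p + 1)))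
    (sn : ℕ → Fin t → ℝ) (s : Fin t → ℝ)
    (hsn : ∀ n, Antitone (sn n) ∧
      ∃ g : Fin t ≃ (sol1 (G n) ξ), ∀ i, sn n i = stoneGR (fV n) (G n) φ (g i).1)
    (hs : Antitone s ∧ ∃ g : Fin t ≃ (sol1 L ξ), ∀ i, s i = stoneLR L ν φ (g i).1) :
    ∀ i : Fin t, Tendsto (fun n => sn n i) atTop (nhds (s i)) := by
  obtain ⟨hs_anti, gL, hgL⟩ := hs
  have hpow : ∀ k : ℕ,
      Tendsto (fun n => ∑ i, sn n i ^ (k + 1)) atTop (𝓝 (∑ i, s i ^ (k + 1))) := by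
    intro k
    have hGn : ∀ n, ∑ i, sn n i ^ (k + 1) = ∑ j ∈ Finset.range t, stoneG (fV n) (G n)
        (Formula.existsAtLeast (j + 1) (Formula.conjBlocks ξ φ (k + 1))) := fun n => by
      obtain ⟨-, g, hg⟩ := hsn n
      simp only [hg, sum_stoneG_existsAtLeast_conjBlocks (fV n) (G n) ξ φ g]
    have hL : ∑ i, s i ^ (k + 1) = ∑ j ∈ Finset.range t,
        stoneL L ν (Formula.existsAtLeast (j + 1) (Formula.conjBlocks ξ φ (k + 1))) := by
      simp only [hgL, sum_stoneL_existsAtLeast_conjBlocks L ν hmeas ξ φ gL]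
    simpa only [hGn, hL] using tendsto_finsetSum _ fun j _ => hlim _ _
  have hbound : ∀ n, sn n ∈ Set.Icc 0 1 := fun n => by
    obtain ⟨-, g, hg⟩ := hsn n
    simp only [Set.mem_Icc, Pi.le_def, hg]
    exact ⟨fun i => (stoneGR_mem_Icc _ _ φ _).1, fun i => (stoneGR_mem_Icc _ _ φ _).2⟩
  intro i
  exact ((continuous_apply i).tendsto s).comp
    (tendsto_of_tendsto_sum_pow isCompact_Icc hbound (fun n => (hsn n).1) hs_anti hpow)

/-- Under the standing assumptions, with `t = |ξ(L)|`, the non-increasing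
rearrangement of the vector `(⟨φ,(Gₙ,u)⟩)_{u ∈ ξ(Gₙ)}` converges coordinatewise to the
non-increasing rearrangement of `(⟨φ,(L,u)⟩)_{u ∈ ξ(L)}`. -/
theorem rearranged_root_values_converge

    (V : ℕ → Type) (fV : ∀ n, Fintype (V n)) (hVne : ∀ n, Nonempty (V n))
    (G : ∀ n, SimpleGraph (V n))
    (W : Type) [MeasurableSpace W] [StandardBorelSpace W]
    (L : SimpleGraph W) (ν : Measure W) [IsProbabilityMeasure ν]
    (hmeas : ∀ (p : ℕ) (φ : Language.graph.Formula (Fin p)), MeasurableSet (solSet L φ))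
    (hFOconv : ∀ (p : ℕ) (φ : Language.graph.Formula (Fin p)),
      ∃ c : ℝ, Tendsto (fun n => stoneG (fV n) (G n) φ) atTop (nhds c))
    (hlim : ∀ (p : ℕ) (φ : Language.graph.Formula (Fin p)),
      Tendsto (fun n => stoneG (fV n) (G n) φ) atTop (nhds (stoneL L ν φ)))
    (ξ : Language.graph.Formula (Fin 1))
    (hfin : (sol1 L ξ).Finite) (hnonempty : (sol1 L ξ).Nonempty)
    (hmin : ∀ ψ : Language.graph.Formula (Fin 1),
      sol1 L ψ ⊆ sol1 L ξ → sol1 L ψ = ∅ ∨ sol1 L ψ = sol1 L ξ)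
    (hcard : ∀ n, Nat.card (sol1 (G n) ξ) = Nat.card (sol1 L ξ))
    (t : ℕ) (ht : t = Nat.card (sol1 L ξ))
    (p : ℕ) (hp : 1 ≤ p) (φ : Language.graph.Formula (Fin (p + 1)))
    (sn : ℕ → Fin t → ℝ) (s : Fin t → ℝ)
    (hsn : ∀ n, Antitone (sn n) ∧
      ∃ g : Fin t ≃ (sol1 (G n) ξ), ∀ i, sn n i = stoneGR (fV n) (G n) φ (g i).1)
    (hs : Antitone s ∧ ∃ g : Fin t ≃ (sol1 L ξ), ∀ i, s i = stoneLR L ν φ (g i).1) :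
    ∀ i : Fin t, Tendsto (fun n => sn n i) atTop (nhds (s i)) :=
  rearranged_root_values_converge_general V fV G W L ν hmeas hlim ξ t p φ sn s hsn hs
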